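/- arXiv:2303.12365 — 4 statements merged into one kernel-verified Lean document; each statement's English description precedes it below -/
import Mathlib

section
/- Let X = {(w,u) ∈ ℤ × ℝ : u ≥ 0, w − u ≤ b} for b ∈ ℝ \ ℤ, and let f = b − ⌊b⌋. Then every (w,u) ∈ X satisfies w − u/(1−f) ≤ ⌊b⌋. -/
/-- The basic two-variable mixed-integer rounding (MIR) inequality. -/
theorem stmt_2 (b : ℝ) (hb : ¬ ∃ z : ℤ, (z : ℝ) = b)
    (w : ℤ) (u : ℝ) (hu : 0 ≤ u) (hwu : (w : ℝ) - u ≤ b) :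
    (w : ℝ) - u / (1 - (b - ⌊b⌋)) ≤ ⌊b⌋ := by
  have hfr : Int.fract b = b - ⌊b⌋ := rfl
  have hf0 : (0:ℝ) < b - ⌊b⌋ := by
    rcases lt_or_eq_of_le (Int.fract_nonneg b) with h | h
    · rwa [hfr] at h
    · exact absurd ⟨⌊b⌋, by rw [hfr] at h; linarith⟩ hb
  have hf1 : b - ⌊b⌋ < 1 := by have := Int.fract_lt_one b; rwa [hfr] at this
  have hpos : (0:ℝ) < 1 - (b - ⌊b⌋) := by linarith
  rcases le_or_gt w ⌊b⌋ with h | h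
  · have h1 : 0 ≤ u / (1 - (b - ⌊b⌋)) := div_nonneg hu hpos.le
    have h2 : (w:ℝ) ≤ ⌊b⌋ := by exact_mod_cast h
    linarith
  · have hk : (1:ℝ) ≤ (w:ℝ) - ⌊b⌋ := by
      have : ⌊b⌋ + 1 ≤ w := h
      have := (Int.cast_le (R := ℝ)).2 this
      push_cast at this; linarith
    rw [sub_le_iff_le_add, ← sub_le_iff_le_add', le_div_iff₀ hpos]
    nlinarith
end

section
/- Let a ∈ ℝ^n, b ∈ ℝ, and X = {(x, y⁺, y⁻) ∈ ℤ^n_{≥0} × ℝ_{≥0} × ℝ_{≥0} : a^T x + y⁺ ≤ b + y⁻}. Let f = b − ⌊b⌋ with 0 < f < 1 and f_j = a_j − ⌊a_j⌋. Then every (x, y⁺, y⁻) ∈ X satisfies ∑_j (⌊a_j⌋ + max(f_j − f, 0)/(1−f)) x_j − y⁻/(1−f) ≤ ⌊b⌋. -/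
/-- The multi-variable mixed-integer rounding (MIR) cut (Theorem `mir`). -/
theorem stmt_4 (n : ℕ) (a : Fin n → ℝ) (b : ℝ)
    (f : ℝ) (hf : f = b - ⌊b⌋) (hf0 : 0 < f) (hf1 : f < 1)
    (x : Fin n → ℤ) (hx : ∀ j, 0 ≤ x j)
    (yp ym : ℝ) (hyp : 0 ≤ yp) (hym : 0 ≤ ym)
    (hfeas : ∑ j, a j * (x j : ℝ) + yp ≤ b + ym) :
    ∑ j, ((⌊a j⌋ : ℝ) + max (a j - ⌊a j⌋ - f) 0 / (1 - f)) * (x j : ℝ)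
      - ym / (1 - f) ≤ ⌊b⌋ := by
  classical
  have h1f : (0:ℝ) < 1 - f := by linarith
  set c : Fin n → ℤ := fun j => if a j - ⌊a j⌋ ≤ f then ⌊a j⌋ else ⌊a j⌋ + 1 with hc
  set r : Fin n → ℝ := fun j => if a j - ⌊a j⌋ ≤ f then 0 else 1 - (a j - ⌊a j⌋) with hr
  have hterm : ∀ j, (⌊a j⌋:ℝ) + max (a j - ⌊a j⌋ - f) 0 / (1 - f)
      = (c j : ℝ) - r j / (1 - f) := by
    intro j
    by_cases h : a j - ⌊a j⌋ ≤ f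
    · simp only [hc, hr, if_pos h, max_eq_right (show a j - ⌊a j⌋ - f ≤ 0 by linarith)]
      ring
    · push_neg at h
      simp only [hc, hr, if_neg (not_le.mpr h)]
      rw [max_eq_left (by linarith)]
      push_cast
      field_simp
      ring
  have hcr : ∀ j, (c j : ℝ) - r j ≤ a j := by
    intro j
    by_cases h : a j - ⌊a j⌋ ≤ f
    · simp only [hc, hr, if_pos h]
      simpa using Int.floor_le (a j)
    · simp only [hc, hr, if_neg h]
      push_cast
      linarith
  have hr0 : ∀ j, 0 ≤ r j := by
    intro j
    by_cases h : a j - ⌊a j⌋ ≤ f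
    · simp only [hr, if_pos h]
      exact le_refl 0
    · simp only [hr, if_neg h]
      have := Int.lt_floor_add_one (a j)
      linarith
  set K : ℤ := ∑ j, c j * x j with hK
  set s : ℝ := ∑ j, r j * (x j : ℝ) + ym with hs
  have hs0 : 0 ≤ s := by
    apply add_nonneg _ hym
    exact Finset.sum_nonneg fun j _ => mul_nonneg (hr0 j) (by exact_mod_cast hx j)
  have hKb : (K:ℝ) ≤ b + s := by
    have h1 : ∑ j, ((c j : ℝ) - r j) * (x j : ℝ) ≤ ∑ j, a j * (x j : ℝ) := by
      apply Finset.sum_le_sum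
      intro j _
      exact mul_le_mul_of_nonneg_right (hcr j) (by exact_mod_cast hx j)
    have h2 : ∑ j, ((c j : ℝ) - r j) * (x j : ℝ)
        = (K:ℝ) - ∑ j, r j * (x j : ℝ) := by
      rw [hK]
      push_cast
      rw [← Finset.sum_sub_distrib]
      exact Finset.sum_congr rfl fun j _ => by ring
    rw [hs]
    linarith
  have key : (K:ℝ) - s / (1 - f) ≤ (⌊b⌋:ℝ) := by
    by_cases hKle : K ≤ ⌊b⌋
    · have : (0:ℝ) ≤ s / (1 - f) := div_nonneg hs0 h1f.le
      have : (K:ℝ) ≤ (⌊b⌋:ℝ) := by exact_mod_cast hKle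
      linarith
    · push_neg at hKle
      have hd : ((⌊b⌋:ℝ) + 1) ≤ (K:ℝ) := by exact_mod_cast hKle
      have hsge : (K:ℝ) - (⌊b⌋:ℝ) - f ≤ s := by
        have : b = (⌊b⌋:ℝ) + f := by linarith [hf]
        linarith
      have h3 : (1 - f) * ((K:ℝ) - (⌊b⌋:ℝ)) ≤ s := by nlinarith
      have h4 : (K:ℝ) - (⌊b⌋:ℝ) ≤ s / (1 - f) := (le_div_iff₀ h1f).mpr (by linarith [h3])
      linarith
  calc ∑ j, ((⌊a j⌋ : ℝ) + max (a j - ⌊a j⌋ - f) 0 / (1 - f)) * (x j : ℝ) - ym / (1 - f)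
      = ∑ j, ((c j : ℝ) - r j / (1 - f)) * (x j : ℝ) - ym / (1 - f) := by
        rw [Finset.sum_congr rfl fun j _ => by rw [hterm j]]
    _ = (K:ℝ) - s / (1 - f) := by
        have e1 : ∑ j, ((c j : ℝ) - r j / (1 - f)) * (x j : ℝ)
            = ∑ j, (c j : ℝ) * (x j : ℝ) - (∑ j, r j * (x j : ℝ)) / (1 - f) := by
          rw [Finset.sum_div, ← Finset.sum_sub_distrib]
          exact Finset.sum_congr rfl fun j _ => by ring
        rw [e1, hK, hs]
        push_cast
        ring
    _ ≤ (⌊b⌋:ℝ) := key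
end

section
/- Let r ∈ ℚ with continued fraction [r_0; r_1, …, r_n], convergents p_i/q_i, and intermediate fractions p_{i+1}^j = j p_i + p_{i-1}, q_{i+1}^j = j q_i + q_{i-1} for 1 ≤ j ≤ r_{i+1}. If j = ⌊r_{i+1}/2⌋ + 1, then |p_{i+1}^j / q_{i+1}^j − r| < |p_i/q_i − r|. -/
set_option maxHeartbeats 1000000


/-- First half of Lemma A.1: the intermediate fraction with
`j = ⌊r_{i+1}/2⌋ + 1` is a strictly better approximation to `r` than the
convergent `p_i/q_i`. -/
theorem stmt_11 (c : ℕ → ℤ) (p q : ℕ → ℤ) (n : ℕ) (r : ℚ)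
    (hp0 : p 0 = c 0) (hq0 : q 0 = 1)
    (hp1 : p 1 = c 0 * c 1 + 1) (hq1 : q 1 = c 1)
    (hp : ∀ i, p (i + 2) = c (i + 2) * p (i + 1) + p i)
    (hq : ∀ i, q (i + 2) = c (i + 2) * q (i + 1) + q i)
    (hcpos : ∀ k, 1 ≤ k → 1 ≤ c k) (hcn : 1 ≤ n → 2 ≤ c n)
    (hval : r = (p n : ℚ) / (q n : ℚ)) :
    ∀ i, i + 2 ≤ n → ∀ j : ℤ, j = c (i + 2) / 2 + 1 →
      |((j * p (i + 1) + p i : ℤ) : ℚ) / ((j * q (i + 1) + q i : ℤ) : ℚ) - r|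
        < |(p (i + 1) : ℚ) / (q (i + 1) : ℚ) - r| := by
  -- positivity of q
  have qpos : ∀ k, 1 ≤ q k := by
    intro k
    induction k using Nat.strong_induction_on with
    | _ k ih =>
      match k with
      | 0 => simpa [hq0]
      | 1 => rw [hq1]; exact hcpos 1 le_rfl
      | (k+2) =>
        rw [hq k]
        have h1 := ih (k+1) (by omega)
        have h2 := ih k (by omega)
        have hc := hcpos (k+2) (by omega)
        nlinarith
  -- determinant identity
  have det : ∀ k, p (k+1) * q k - p k * q (k+1) = (-1)^k := by
    intro k
    induction k with
    | zero => rw [hp0, hq0, hp1, hq1]; ring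
    | succ k ih =>
      rw [hp k, hq k]
      linear_combination -ih
  set E : ℕ → ℤ := fun k => (-1)^k * (p n * q k - p k * q n) with hEdef
  have hE : ∀ k, E k = (-1)^k * (p n * q k - p k * q n) := fun k => rfl
  have sq1 : ∀ k : ℕ, ((-1:ℤ)^k)^2 = 1 := by
    intro k; rw [← pow_mul, mul_comm, pow_mul]; norm_num
  -- sign identity
  have sgn : ∀ k, p k * q n - p n * q k = (-1)^(k+1) * E k := by
    intro k
    rw [hE]
    linear_combination (p n * q k - p k * q n) * sq1 k
  -- recurrence for E
  have erec : ∀ k, E k = c (k+2) * E (k+1) + E (k+2) := by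
    intro k
    simp only [hE]
    rw [hp k, hq k]
    ring
  -- nonnegativity / positivity of E by backward induction
  have key : ∀ d, ∀ k, k + d = n → 0 ≤ E k ∧ (1 ≤ d → 1 ≤ E k) := by
    intro d
    induction d using Nat.strong_induction_on with
    | _ d ih =>
      match d with
      | 0 =>
        intro k hk
        subst hk
        constructor
        · simp [hE]
        · omega
      | 1 =>
        intro k hk
        have hEk : E k = 1 := by
          rw [hE, ← hk, det k]
          linear_combination sq1 k
        rw [hEk]
        exact ⟨zero_le_one, fun _ => le_rfl⟩
      | (d+2) =>
        intro k hk
        have h1 := ih (d+1) (by omega) (k+1) (by omega)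
        have h2 := ih d (by omega) (k+2) (by omega)
        have hc := hcpos (k+2) (by omega)
        have hrec := erec k
        constructor
        · nlinarith [h1.1, h2.1]
        · intro _; nlinarith [h1.2 (by omega), h2.1]
  -- E decreasing
  have Edec : ∀ k, k + 1 ≤ n → E (k+1) ≤ E k := by
    intro k hk
    rcases Nat.lt_or_ge (k+1) n with h | h
    · have hrec := erec k
      have h1 := (key (n - (k+1)) (k+1) (by omega)).1
      have h2 := (key (n - (k+2)) (k+2) (by omega)).1
      have hc := hcpos (k+2) (by omega)
      nlinarith
    · have hkn : k + 1 = n := by omega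
      have h0 : E (k+1) = 0 := by rw [hE, hkn]; simp
      have h1 := (key 1 k (by omega)).2 le_rfl
      omega
  intro i hi j hj
  have ha1 : 1 ≤ E (i+1) := (key (n - (i+1)) (i+1) (by omega)).2 (by omega)
  have hb0 : 0 ≤ E (i+2) := (key (n - (i+2)) (i+2) (by omega)).1
  have hba : E (i+2) ≤ E (i+1) := Edec (i+1) (by omega)
  have hrec := erec i
  have hc1 : 1 ≤ c (i+2) := hcpos (i+2) (by omega)
  have hj1 : 1 ≤ j := by omega
  have hjc : 0 ≤ c (i+2) - j := by omega
  have hjc2 : c (i+2) + 1 ≤ 2 * j := by omega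
  have hq1p : 1 ≤ q (i+1) := qpos (i+1)
  have hq0p : 1 ≤ q i := qpos i
  have hqnp : 1 ≤ q n := qpos n
  have hQjp : 1 ≤ j * q (i+1) + q i := by nlinarith
  -- numerator identities
  have hA : |p (i+1) * q n - p n * q (i+1)| = E (i+1) := by
    rw [sgn (i+1), abs_mul, abs_pow, abs_neg, abs_one, one_pow, one_mul,
      abs_of_nonneg (by linarith : (0:ℤ) ≤ E (i+1))]
  have hXid : (j * p (i+1) + p i) * q n - p n * (j * q (i+1) + q i)
      = (-1)^(i+1) * (E i - j * E (i+1)) := by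
    have s1 := sgn (i+1)
    have s2 := sgn i
    linear_combination j * s1 + s2
  have hXnn : 0 ≤ E i - j * E (i+1) := by nlinarith
  have hX : |(j * p (i+1) + p i) * q n - p n * (j * q (i+1) + q i)|
      = E i - j * E (i+1) := by
    rw [hXid, abs_mul, abs_pow, abs_neg, abs_one, one_pow, one_mul,
      abs_of_nonneg hXnn]
  -- the main integer inequality
  have main : |(j * p (i+1) + p i) * q n - (j * q (i+1) + q i) * p n| * (q (i+1) * q n)
      < |p (i+1) * q n - q (i+1) * p n| * ((j * q (i+1) + q i) * q n) := by
    rw [mul_comm (j * q (i+1) + q i) (p n), mul_comm (q (i+1)) (p n), hX, hA, hrec]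
    have h1 : 0 ≤ (2*j - c (i+2) - 1) * E (i+1) * q (i+1) * q n :=
      mul_nonneg (mul_nonneg (mul_nonneg (by omega) (by linarith)) (by linarith)) (by linarith)
    have h2 : 0 ≤ (E (i+1) - E (i+2)) * q (i+1) * q n :=
      mul_nonneg (mul_nonneg (by linarith) (by linarith)) (by linarith)
    have h3 : 1 ≤ E (i+1) * q i * q n := by
      have h4 : 1 ≤ E (i+1) * q i := by nlinarith
      nlinarith
    linarith [h1, h2, h3]
  -- transfer to ℚ
  have hQjQ : (0:ℚ) < ((j * q (i+1) + q i : ℤ) : ℚ) := by exact_mod_cast hQjp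
  have hq1Q : (0:ℚ) < ((q (i+1) : ℤ) : ℚ) := by exact_mod_cast hq1p
  have hqnQ : (0:ℚ) < ((q n : ℤ) : ℚ) := by exact_mod_cast hqnp
  rw [hval, div_sub_div _ _ (ne_of_gt hQjQ) (ne_of_gt hqnQ),
    div_sub_div _ _ (ne_of_gt hq1Q) (ne_of_gt hqnQ), abs_div, abs_div,
    abs_of_pos (mul_pos hQjQ hqnQ), abs_of_pos (mul_pos hq1Q hqnQ),
    div_lt_div_iff₀ (mul_pos hQjQ hqnQ) (mul_pos hq1Q hqnQ)]
  exact_mod_cast main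
end

section
/- Let X = {(x, y⁻) ∈ ℤ^n_{≥0} × ℝ_{≥0} : a^T x ≤ b + y⁻}, with f = b − ⌊b⌋ ∈ (0,1) and f_j = a_j − ⌊a_j⌋. Let c_j ≤ ⌊a_j⌋ + max(f_j − f, 0)/(1−f) for all j and d ≥ ⌊b⌋. Then ∑_j c_j x_j − y⁻/(1−f) ≤ d is valid for X. -/
/-!
Each column `t` is split as `mirCoeff f t = r - g / (1 - f)` with `r` an integer, `g ≥ 0` and
`r ≤ t + g` (round `t` up exactly when its fractional part exceeds `f`). Moving the slack `g x`
into the continuous variable turns `a x ≤ b + y` into `r x ≤ b + (y + g x)` with `r x` integral,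
and the single-row MIR inequality `z ≤ ⌊b⌋ + y / (1 - fract b)` finishes. The cut coefficients
`c ≤ mirCoeff` and the right-hand side `d ≥ ⌊b⌋` only weaken it, since `x ≥ 0`.
-/

open Finset

/-- `f` stands for the fractional part of the right-hand side. -/
noncomputable def mirCoeff (f t : ℝ) : ℝ := ⌊t⌋ + max (Int.fract t - f) 0 / (1 - f)

lemma int_le_floor_add_div_one_sub_fract {b y : ℝ} {z : ℤ} (hy : 0 ≤ y)
    (h : (z : ℝ) ≤ b + y) : (z : ℝ) ≤ ⌊b⌋ + y / (1 - Int.fract b) := by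
  have hpos : 0 < 1 - Int.fract b := sub_pos.mpr (Int.fract_lt_one b)
  rcases le_or_gt z ⌊b⌋ with hle | hgt
  · have : (z : ℝ) ≤ ⌊b⌋ := by exact_mod_cast hle
    linarith [div_nonneg hy hpos.le]
  · have hz : (⌊b⌋ : ℝ) + 1 ≤ z := by exact_mod_cast hgt
    have hb := Int.floor_add_fract b
    rw [← sub_le_iff_le_add', le_div_iff₀ hpos]
    nlinarith [Int.fract_nonneg b]

lemma exists_int_le_add_and_mirCoeff_eq {f : ℝ} (hf : f ≠ 1) (t : ℝ) :
    ∃ r : ℤ, ∃ g : ℝ, 0 ≤ g ∧ (r : ℝ) ≤ t + g ∧ mirCoeff f t = r - g / (1 - f) := by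
  have hne : 1 - f ≠ 0 := sub_ne_zero.mpr hf.symm
  have ht := Int.floor_add_fract t
  rcases le_or_gt (Int.fract t) f with hle | hgt
  · refine ⟨⌊t⌋, 0, le_rfl, by linarith [Int.fract_nonneg t], ?_⟩
    simp [mirCoeff, max_eq_right (sub_nonpos.mpr hle)]
  · refine ⟨⌊t⌋ + 1, 1 - Int.fract t, by linarith [Int.fract_lt_one t], by push_cast; linarith, ?_⟩
    rw [mirCoeff, max_eq_left (sub_nonneg.mpr hgt.le)]
    push_cast
    field_simp
    ring

theorem mirCoeff_cut_le_floor {ι : Type*} [Fintype ι] (a : ι → ℝ) (b : ℝ)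
    (x : ι → ℤ) (hx : ∀ j, 0 ≤ x j) (y : ℝ) (hy : 0 ≤ y)
    (hfeas : ∑ j, a j * x j ≤ b + y) :
    ∑ j, mirCoeff (Int.fract b) (a j) * x j - y / (1 - Int.fract b) ≤ ⌊b⌋ := by
  choose r g hg hrg hcoeff using
    fun j ↦ exists_int_le_add_and_mirCoeff_eq (Int.fract_lt_one b).ne (a j)
  have hxR (j : ι) : (0 : ℝ) ≤ x j := by exact_mod_cast hx j
  have hslack : 0 ≤ ∑ j, g j * x j := sum_nonneg fun j _ ↦ mul_nonneg (hg j) (hxR j)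
  have hround : ((∑ j, r j * x j : ℤ) : ℝ) ≤ b + (y + ∑ j, g j * x j) := by
    have : ∑ j, (r j : ℝ) * x j ≤ ∑ j, (a j * x j + g j * x j) :=
      sum_le_sum fun j _ ↦ by nlinarith [hrg j, hxR j]
    push_cast
    rw [sum_add_distrib] at this
    linarith
  have hmir := int_le_floor_add_div_one_sub_fract (by linarith) hround
  have hsplit : ∑ j, mirCoeff (Int.fract b) (a j) * x j
      = ∑ j, (r j : ℝ) * x j - (∑ j, g j * x j) / (1 - Int.fract b) := by
    simp only [hcoeff, sub_mul, sum_sub_distrib, sum_div, div_mul_eq_mul_div]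
  push_cast at hmir
  rw [hsplit]
  rw [add_div] at hmir
  linarith

theorem stmt_17_general (n : ℕ) (a : Fin n → ℝ) (b : ℝ)
    (f : ℝ) (hf : f = b - ⌊b⌋)
    (c : Fin n → ℝ) (d : ℝ)
    (hc : ∀ j, c j ≤ (⌊a j⌋ : ℝ) + max (a j - ⌊a j⌋ - f) 0 / (1 - f))
    (hd : (⌊b⌋ : ℝ) ≤ d)
    (x : Fin n → ℤ) (hx : ∀ j, 0 ≤ x j)
    (ym : ℝ) (hym : 0 ≤ ym)
    (hfeas : ∑ j, a j * (x j : ℝ) ≤ b + ym) :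
    ∑ j, c j * (x j : ℝ) - ym / (1 - f) ≤ d := by
  rw [Int.self_sub_floor] at hf
  subst hf
  have hweaken : ∑ j, c j * (x j : ℝ) ≤ ∑ j, mirCoeff (Int.fract b) (a j) * x j :=
    sum_le_sum fun j _ ↦ mul_le_mul_of_nonneg_right (hc j) (by exact_mod_cast hx j)
  linarith [mirCoeff_cut_le_floor a b x hx ym hym hfeas]

/-- Safe weakening of the multi-variable MIR cut: rounding the cut
coefficients down and the right-hand side up preserves validity. -/
theorem stmt_17 (n : ℕ) (a : Fin n → ℝ) (b : ℝ)
    (f : ℝ) (hf : f = b - ⌊b⌋) (hf0 : 0 < f) (hf1 : f < 1)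
    (c : Fin n → ℝ) (d : ℝ)
    (hc : ∀ j, c j ≤ (⌊a j⌋ : ℝ) + max (a j - ⌊a j⌋ - f) 0 / (1 - f))
    (hd : (⌊b⌋ : ℝ) ≤ d)
    (x : Fin n → ℤ) (hx : ∀ j, 0 ≤ x j)
    (ym : ℝ) (hym : 0 ≤ ym)
    (hfeas : ∑ j, a j * (x j : ℝ) ≤ b + ym) :
    ∑ j, c j * (x j : ℝ) - ym / (1 - f) ≤ d :=
  stmt_17_general n a b f hf c d hc hd x hx ym hym hfeas
end
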